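/- The map assigning to each C∞-word w its vertical representation (Ψ(w), Ψ(w~)) is injective on C∞. -/

import Mathlib

/-!
Ψ(D w) is Ψ(w) with its first letter dropped and a leading 0 read as 2, and D commutes with
reversal, so by induction on the height the two frontiers of w determine D w. The second letter
of Ψ(w) differs from 2 exactly when w begins with a run of length 1, i.e. when D erased a leading
1 of Δ(w); symmetrically at the right end. This recovers Δ(w), and a word over {1,2} is
determined by its first letter and its run lengths. Words of height 1 have the form a or ab with
a ≠ b, and are told apart by their first and last letters.
-/

namespace CInfWords

open scoped Classical

/-- Run-length encoding Δ of a word. -/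
def rle : List ℕ → List ℕ
  | [] => []
  | [_] => [1]
  | a :: b :: l =>
    if a = b then
      match rle (b :: l) with
      | [] => [1]
      | c :: r => (c + 1) :: r
    else 1 :: rle (b :: l)

/-- Erase a leading `1`, if any. -/
def trim1 : List ℕ → List ℕ
  | 1 :: l => l
  | l => l

/-- The derivative `D`: the run-length encoding with the first and/or the last
symbol erased when they are equal to `1`. -/
def D (w : List ℕ) : List ℕ := trim1 ((trim1 (rle w).reverse).reverse)

/-- Words over Σ = {1,2}. -/
def IsWord (w : List ℕ) : Prop := ∀ x ∈ w, x = 1 ∨ x = 2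

/-- Words over Σ₀ = {0,1,2}. -/
def IsWord0 (w : List ℕ) : Prop := ∀ x ∈ w, x = 0 ∨ x = 1 ∨ x = 2

/-- Σ₀^{++}: words over Σ₀ that are empty or begin with a nonzero symbol. -/
def Spp (w : List ℕ) : Prop := IsWord0 w ∧ (w = [] ∨ w.headI ≠ 0)

/-- C^∞-words: every iterated derivative is a word over Σ = {1,2}. -/
def Cinf (w : List ℕ) : Prop := ∀ k, IsWord (D^[k] w)

/-- The height of a C^∞-word: the least k with D^[k] w = ε. -/
noncomputable def height (w : List ℕ) : ℕ := sInf {k | D^[k] w = []}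

/-- The root of a C^∞-word of height k > 0: its (k-1)-st derivative. -/
noncomputable def root (w : List ℕ) : List ℕ := D^[height w - 1] w

/-- `v` is a primitive of `w`. -/
def Primitive (v w : List ℕ) : Prop := IsWord v ∧ D v = w

/-- The complement: swap 1's and 2's. -/
def compl (w : List ℕ) : List ℕ := w.map (fun x => 3 - x)

/-- Minimal C^∞-words: every derivative is a shortest primitive of the next one. -/
def Minimal (w : List ℕ) : Prop :=
  Cinf w ∧ 0 < height w ∧
    ∀ j, j + 2 ≤ height w → ∀ v, Primitive v (D^[j+1] w) → (D^[j] w).length ≤ v.length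

/-- Maximal C^∞-words: every derivative is a longest primitive of the next one. -/
def Maximal (w : List ℕ) : Prop :=
  Cinf w ∧ 0 < height w ∧
    ∀ j, j + 2 ≤ height w → ∀ v, Primitive v (D^[j+1] w) → v.length ≤ (D^[j] w).length

def LeftMinimal (w : List ℕ) : Prop := ∃ v, Minimal v ∧ w <+: v
def RightMinimal (w : List ℕ) : Prop := ∃ v, Minimal v ∧ w <:+ v
def LeftMaximal (w : List ℕ) : Prop := ∃ v, Maximal v ∧ w <+: v
def RightMaximal (w : List ℕ) : Prop := ∃ v, Maximal v ∧ w <:+ v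

/-- Single-rooted minimal words. -/
def SRMin (w : List ℕ) : Prop := Minimal w ∧ (root w).length = 1

/-- Double-rooted minimal words. -/
def DRMin (w : List ℕ) : Prop := Minimal w ∧ (root w).length = 2

/-- The left frontier Ψ(w). -/
noncomputable def psi (w : List ℕ) : List ℕ :=
  (List.range (height w)).map fun i =>
    if i = 0 then w.getD 0 0
    else if (D^[i] w).getD 0 0 = 2 ∧ (D^[i-1] w).getD 0 0 ≠ (D^[i-1] w).getD 1 0
      then 0
    else (D^[i] w).getD 0 0

/-- The single-rooted minimal word with left frontier U (if it exists). -/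
noncomputable def srmOf (U : List ℕ) : List ℕ :=
  if h : ∃ w, SRMin w ∧ psi w = U then h.choose else []

/-- The double-rooted minimal word with left frontier U (if it exists). -/
noncomputable def drmOf (U : List ℕ) : List ℕ :=
  if h : ∃ w, DRMin w ∧ psi w = U then h.choose else []

/-- Γs: the right frontier of the single-rooted minimal word with left frontier U. -/
noncomputable def Gs (U : List ℕ) : List ℕ := psi (srmOf U).reverse

/-- Γd: the right frontier of the double-rooted minimal word with left frontier U. -/
noncomputable def Gd (U : List ℕ) : List ℕ := psi (drmOf U).reverse

/-- Θ = Γs ∘ Γd. -/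
noncomputable def Th (U : List ℕ) : List ℕ := Gs (Gd U)

/-- Π = Γd ∘ Γs. -/
noncomputable def Pp (U : List ℕ) : List ℕ := Gd (Gs U)

/-- One step in the graph G: from node U, the edge labeled 1 goes to U·1, the edge
labeled 2 goes to U·2, and the edge labeled 0 goes to Θ(U)·2. -/
noncomputable def step (U : List ℕ) (a : ℕ) : List ℕ :=
  if a = 1 then U ++ [1] else if a = 2 then U ++ [2] else Th U ++ [2]

/-- The endpoint of the path in G starting at the origin ε and labeled by W. -/
noncomputable def pathEnd (W : List ℕ) : List ℕ := W.foldl step []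

/-- W ∈ Σ₀^{++} labels a directed path in G from ε to U. -/
def LabelsPath (W U : List ℕ) : Prop := Spp W ∧ pathEnd W = U

/-- ‖U‖: the number of words in Σ₀^{++} labeling a path in G from ε to U. -/
noncomputable def normG (U : List ℕ) : ℕ := {W | LabelsPath W U}.ncard

/-- |U|: the length of the single-rooted minimal word with left frontier U. -/
noncomputable def len (U : List ℕ) : ℕ := (srmOf U).length

/-- u is the minimal part of w: the first (leftmost-occurring) factor of w that
is a single-rooted minimal word of the same height as w. -/
def IsMinPart (u w : List ℕ) : Prop :=
  ∃ s t, w = s ++ u ++ t ∧ SRMin u ∧ height u = height w ∧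
    ∀ u' s' t', w = s' ++ u' ++ t' → SRMin u' → height u' = height w →
      s.length ≤ s'.length

theorem modifyLast_cons {α : Type*} {f : α → α} (a : α) {l : List α} (hl : l ≠ []) :
    (a :: l).modifyLast f = a :: l.modifyLast f :=
  List.modifyLast_append_of_right_ne_nil f [a] l hl

theorem modifyLast_singleton {α : Type*} (f : α → α) (a : α) : [a].modifyLast f = [f a] :=
  List.modifyLast_concat f a []

theorem IsWord.of_cons {a : ℕ} {l : List ℕ} (h : IsWord (a :: l)) : IsWord l :=
  fun x hx => h x (List.mem_cons_of_mem a hx)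

theorem rle_cons_cons_of_ne {a b : ℕ} (l : List ℕ) (h : a ≠ b) :
    rle (a :: b :: l) = 1 :: rle (b :: l) := by
  simp [rle, h]

theorem rle_cons_cons_self {a c : ℕ} {l r : List ℕ} (h : rle (a :: l) = c :: r) :
    rle (a :: a :: l) = (c + 1) :: r := by
  simp [rle, h]

theorem exists_rle_eq_succ_cons : ∀ {w : List ℕ}, w ≠ [] → ∃ c r, rle w = (c + 1) :: r
  | [_], _ => ⟨0, [], rfl⟩
  | a :: b :: l, _ => by
    obtain ⟨c, r, h⟩ := exists_rle_eq_succ_cons (w := b :: l) (List.cons_ne_nil _ _)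
    by_cases hab : a = b
    · subst hab
      exact ⟨c + 1, r, rle_cons_cons_self h⟩
    · exact ⟨0, rle (b :: l), rle_cons_cons_of_ne l hab⟩

theorem rle_ne_nil {w : List ℕ} (h : w ≠ []) : rle w ≠ [] := by
  obtain ⟨c, r, hcr⟩ := exists_rle_eq_succ_cons h
  simp [hcr]

theorem rle_eq_nil_iff {w : List ℕ} : rle w = [] ↔ w = [] :=
  ⟨fun h => by_contra fun hw => rle_ne_nil hw h, by rintro rfl; rfl⟩

theorem getD_rle_cons_cons_eq_one_iff {a b : ℕ} (l : List ℕ) :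
    (rle (a :: b :: l)).getD 0 0 = 1 ↔ a ≠ b := by
  by_cases hab : a = b
  · subst hab
    obtain ⟨c, r, h⟩ := exists_rle_eq_succ_cons (w := a :: l) (List.cons_ne_nil _ _)
    simp [rle_cons_cons_self h]
  · simp [rle_cons_cons_of_ne l hab, hab]

theorem length_rle_le : ∀ w : List ℕ, (rle w).length ≤ w.length
  | [] => le_rfl
  | [_] => le_rfl
  | a :: b :: l => by
    have ih := length_rle_le (b :: l)
    by_cases hab : a = b
    · subst hab
      obtain ⟨c, r, h⟩ := exists_rle_eq_succ_cons (w := a :: l) (List.cons_ne_nil _ _)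
      rw [h] at ih
      simp only [rle_cons_cons_self h, List.length_cons] at ih ⊢
      omega
    · simpa [rle_cons_cons_of_ne l hab] using ih

theorem rle_append_singleton :
    ∀ (m : List ℕ) (a : ℕ), m ≠ [] →
      rle (m ++ [a]) = if m.getLast? = some a then (rle m).modifyLast (· + 1) else rle m ++ [1]
  | [b], a, _ => by
    by_cases hba : b = a
    · subst hba
      have h1 : rle [b] = [1] := rfl
      simp [rle_cons_cons_self h1, h1, modifyLast_singleton]
    · simp [rle_cons_cons_of_ne [] hba, hba, rle]
  | b :: c :: t, a, _ => by
    have ih := rle_append_singleton (c :: t) a (List.cons_ne_nil _ _)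
    obtain ⟨x, r, hx⟩ := exists_rle_eq_succ_cons (w := c :: t) (List.cons_ne_nil _ _)
    rw [List.getLast?_cons_cons]
    simp only [List.cons_append] at ih ⊢
    by_cases hbc : b = c
    · subst hbc
      rw [rle_cons_cons_self hx]
      split_ifs at ih ⊢ with hl
      · rw [hx] at ih
        rcases eq_or_ne r [] with rfl | hr
        · rw [modifyLast_singleton] at ih
          rw [rle_cons_cons_self ih, modifyLast_singleton]
        · rw [modifyLast_cons _ hr] at ih
          rw [rle_cons_cons_self ih, modifyLast_cons _ hr]
      · rw [hx] at ih
        rw [rle_cons_cons_self ih]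
        rfl
    · rw [rle_cons_cons_of_ne t hbc, rle_cons_cons_of_ne _ hbc, ih]
      split_ifs
      · rw [modifyLast_cons _ (rle_ne_nil (List.cons_ne_nil _ _))]
      · rfl

theorem rle_reverse : ∀ w : List ℕ, rle w.reverse = (rle w).reverse
  | [] => rfl
  | [_] => rfl
  | a :: b :: l => by
    obtain ⟨c, r, hx⟩ := exists_rle_eq_succ_cons (w := b :: l) (List.cons_ne_nil _ _)
    rw [List.reverse_cons, rle_append_singleton _ a (by simp), rle_reverse (b :: l),
      List.getLast?_reverse, List.head?_cons]
    by_cases hab : a = b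
    · subst hab
      rw [if_pos rfl, rle_cons_cons_self hx, hx, List.reverse_cons, List.reverse_cons,
        List.modifyLast_concat]
    · rw [if_neg (by simpa [eq_comm] using hab), rle_cons_cons_of_ne l hab, List.reverse_cons]

theorem exists_eq_singleton_of_rle_eq {w : List ℕ} (h : rle w = [1]) : ∃ a, w = [a] := by
  rcases w with _ | ⟨a, _ | ⟨b, l⟩⟩
  · simp [rle] at h
  · exact ⟨a, rfl⟩
  · by_cases hab : a = b
    · subst hab
      obtain ⟨c, r, hcr⟩ := exists_rle_eq_succ_cons (w := a :: l) (List.cons_ne_nil _ _)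
      simp [rle_cons_cons_self hcr] at h
    · simp [rle_cons_cons_of_ne l hab, rle_eq_nil_iff] at h

theorem exists_eq_pair_of_rle_eq {w : List ℕ} (h : rle w = [1, 1]) :
    ∃ a b, a ≠ b ∧ w = [a, b] := by
  rcases w with _ | ⟨a, _ | ⟨b, l⟩⟩
  · simp [rle] at h
  · simp [rle] at h
  · by_cases hab : a = b
    · subst hab
      obtain ⟨c, r, hcr⟩ := exists_rle_eq_succ_cons (w := a :: l) (List.cons_ne_nil _ _)
      simp [rle_cons_cons_self hcr] at h
    · rw [rle_cons_cons_of_ne l hab, List.cons.injEq] at h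
      obtain ⟨x, hx⟩ := exists_eq_singleton_of_rle_eq h.2
      obtain ⟨rfl, rfl⟩ := List.cons.inj hx
      exact ⟨a, b, hab, rfl⟩

theorem eq_of_rle_eq : ∀ {w v : List ℕ}, IsWord w → IsWord v →
    w.getD 0 0 = v.getD 0 0 → rle w = rle v → w = v
  | [], _, _, _, _, h => (rle_eq_nil_iff.mp h.symm).symm
  | _ :: _, [], _, _, _, h => rle_eq_nil_iff.mp h
  | [_], [_], _, _, hh, _ => by simpa using hh
  | [_], _ :: _ :: _, _, _, _, h => by
    obtain ⟨x, hx⟩ := exists_eq_singleton_of_rle_eq h.symm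
    simp at hx
  | _ :: _ :: _, [_], _, _, _, h => by
    obtain ⟨x, hx⟩ := exists_eq_singleton_of_rle_eq h
    simp at hx
  | a :: b :: t, c :: d :: s, hw, hv, hh, h => by
    obtain rfl : a = c := by simpa using hh
    have hbd : b = d := by
      have hiff := (getD_rle_cons_cons_eq_one_iff t).symm.trans
        (h ▸ getD_rle_cons_cons_eq_one_iff s)
      rcases hw a (by simp) with ha | ha <;> rcases hw b (by simp) with hb | hb <;>
        rcases hv d (by simp) with hd | hd <;> simp_all
    subst hbd
    have htail : rle (b :: t) = rle (b :: s) := by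
      by_cases hab : a = b
      · subst hab
        obtain ⟨x, r, hx⟩ := exists_rle_eq_succ_cons (w := a :: t) (List.cons_ne_nil _ _)
        obtain ⟨y, r', hy⟩ := exists_rle_eq_succ_cons (w := a :: s) (List.cons_ne_nil _ _)
        rw [rle_cons_cons_self hx, rle_cons_cons_self hy] at h
        simp_all
      · rw [rle_cons_cons_of_ne t hab, rle_cons_cons_of_ne s hab] at h
        exact (List.cons.inj h).2
    rw [eq_of_rle_eq hw.of_cons hv.of_cons rfl htail]

theorem trim1_cons (a : ℕ) (l : List ℕ) : trim1 (a :: l) = if a = 1 then l else a :: l := by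
  rcases a with _ | _ | a <;> simp [trim1]

theorem ite_append_trim1 (l : List ℕ) : (if l.getD 0 0 = 1 then [1] else []) ++ trim1 l = l := by
  rcases l with _ | ⟨a, l⟩
  · rfl
  · by_cases ha : a = 1 <;> simp [trim1_cons, ha]

theorem length_trim1_le (l : List ℕ) : (trim1 l).length ≤ l.length := by
  rcases l with _ | ⟨a, l⟩
  · rfl
  · rw [trim1_cons]; split <;> simp

theorem trim1_reverse_trim1_comm (B : List ℕ) :
    trim1 (trim1 B).reverse = (trim1 (trim1 B.reverse).reverse).reverse := by
  rcases B with _ | ⟨x, t⟩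
  · rfl
  rcases t.eq_nil_or_concat with rfl | ⟨m, y, rfl⟩
  · by_cases hx : x = 1 <;> simp [hx, trim1]
  · by_cases hx : x = 1 <;> by_cases hy : y = 1 <;> simp [trim1_cons, hx, hy]

theorem D_eq_reverse (w : List ℕ) : D w = (trim1 (trim1 (rle w)).reverse).reverse := by
  rw [trim1_reverse_trim1_comm, List.reverse_reverse]
  rfl

theorem D_reverse (w : List ℕ) : D w.reverse = (D w).reverse := by
  rw [D_eq_reverse w, List.reverse_reverse, D, rle_reverse, List.reverse_reverse]

theorem iterate_D_reverse (k : ℕ) (w : List ℕ) : D^[k] w.reverse = (D^[k] w).reverse := by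
  induction k generalizing w with
  | zero => rfl
  | succ k ih => rw [Function.iterate_succ_apply, Function.iterate_succ_apply, D_reverse, ih]

theorem length_trim1_rle_lt {w : List ℕ} (hw : w ≠ []) : (trim1 (rle w)).length < w.length := by
  rcases w with _ | ⟨a, _ | ⟨b, l⟩⟩
  · exact absurd rfl hw
  · simp [rle, trim1]
  · have hle := length_rle_le (b :: l)
    by_cases hab : a = b
    · subst hab
      obtain ⟨c, r, hcr⟩ := exists_rle_eq_succ_cons (w := a :: l) (List.cons_ne_nil _ _)
      rw [hcr] at hle
      rw [rle_cons_cons_self hcr, trim1_cons, if_neg (by omega)]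
      simp only [List.length_cons] at hle ⊢
      omega
    · rw [rle_cons_cons_of_ne l hab, trim1_cons, if_pos rfl]
      simpa using Nat.lt_succ_of_le hle

theorem length_D_lt {w : List ℕ} (hw : w ≠ []) : (D w).length < w.length := by
  rw [D_eq_reverse, List.length_reverse]
  exact (length_trim1_le _).trans_lt (by simpa using length_trim1_rle_lt hw)

theorem rle_eq_ite_append_D_append_ite {w : List ℕ} (hD : D w ≠ []) :
    rle w = (if (rle w).getD 0 0 = 1 then [1] else []) ++ D w ++
      (if (rle w.reverse).getD 0 0 = 1 then [1] else []) := by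
  set A := (trim1 (rle w).reverse).reverse
  have hback : rle w = A ++ (if (rle w.reverse).getD 0 0 = 1 then [1] else []) := by
    have h := congrArg List.reverse (ite_append_trim1 (rle w).reverse)
    rw [List.reverse_reverse, List.reverse_append, apply_ite List.reverse, List.reverse_singleton,
      List.reverse_nil] at h
    rw [rle_reverse, h]
  have hfront : (if A.getD 0 0 = 1 then [1] else []) ++ D w = A := ite_append_trim1 A
  have hA : A ≠ [] := by
    intro hA
    exact hD (by rw [show D w = trim1 A from rfl, hA]; rfl)
  have hhead : (rle w).getD 0 0 = A.getD 0 0 := by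
    rw [hback, List.getD_append _ _ _ _ (List.length_pos_iff.mpr hA)]
  rw [hhead, hfront, ← hback]

theorem rle_eq_of_D_eq_nil {w : List ℕ} (hw : w ≠ []) (hD : D w = []) :
    rle w = [1] ∨ rle w = [1, 1] := by
  have hA : trim1 (rle w).reverse = [] ∨ trim1 (rle w).reverse = [1] := by
    have h := ite_append_trim1 (trim1 (rle w).reverse).reverse
    rw [show trim1 (trim1 (rle w).reverse).reverse = D w from rfl, hD, List.append_nil] at h
    split_ifs at h
    · exact .inr (by simpa using (congrArg List.reverse h).symm)
    · exact .inl (by simpa using h.symm)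
  have hB := ite_append_trim1 (rle w).reverse
  have hne : (rle w).reverse ≠ [] := List.reverse_ne_nil_iff.mpr (rle_ne_nil hw)
  have key : (rle w).reverse = [1] ∨ (rle w).reverse = [1, 1] := by
    rcases hA with hA | hA <;> rw [hA] at hB <;> split_ifs at hB <;> simp_all
  simpa [List.reverse_eq_cons_iff] using key

theorem exists_iterate_D_eq_nil (w : List ℕ) : ∃ k, D^[k] w = [] := by
  rcases eq_or_ne w [] with rfl | hw
  · exact ⟨0, rfl⟩
  · obtain ⟨k, hk⟩ := exists_iterate_D_eq_nil (D w)
    exact ⟨k + 1, hk⟩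
termination_by w.length
decreasing_by exact length_D_lt hw

theorem iterate_height_eq_nil (w : List ℕ) : D^[height w] w = [] :=
  Nat.sInf_mem (exists_iterate_D_eq_nil w)

theorem height_eq_zero_iff {w : List ℕ} : height w = 0 ↔ w = [] := by
  refine ⟨fun h => ?_, fun h => Nat.sInf_eq_zero.mpr (.inl h)⟩
  simpa [h] using iterate_height_eq_nil w

theorem height_D (w : List ℕ) : height (D w) = height w - 1 := by
  rcases eq_or_ne w [] with rfl | hw
  · simp [show D [] = [] from rfl, height_eq_zero_iff.mpr]
  obtain ⟨k, hk⟩ := Nat.exists_eq_succ_of_ne_zero (mt height_eq_zero_iff.mp hw)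
  have hkD : D^[k] (D w) = [] := by simpa [hk] using iterate_height_eq_nil w
  have hle : height w ≤ height (D w) + 1 := Nat.sInf_le (iterate_height_eq_nil (D w))
  have hge : height (D w) ≤ k := Nat.sInf_le hkD
  omega

theorem height_reverse (w : List ℕ) : height w.reverse = height w := by
  simp only [height, iterate_D_reverse, List.reverse_eq_nil_iff]

theorem D_ne_nil_of_one_lt_height {w : List ℕ} (h : 1 < height w) : D w ≠ [] :=
  mt height_eq_zero_iff.mpr (by rw [height_D]; omega)

theorem Cinf.D {w : List ℕ} (h : Cinf w) : Cinf (D w) := fun k => h (k + 1)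

theorem Cinf.reverse {w : List ℕ} (h : Cinf w) : Cinf w.reverse := fun k x hx => by
  rw [iterate_D_reverse, List.mem_reverse] at hx
  exact h k x hx

theorem IsWord.getD_zero {u : List ℕ} (h : IsWord u) (hu : u ≠ []) :
    u.getD 0 0 = 1 ∨ u.getD 0 0 = 2 := by
  obtain ⟨a, t, rfl⟩ := List.exists_cons_of_ne_nil hu
  exact h a List.mem_cons_self

theorem Cinf.isWord {w : List ℕ} (h : Cinf w) : IsWord w := h 0

theorem length_psi (w : List ℕ) : (psi w).length = height w := by simp [psi]

theorem getD_psi_zero {w : List ℕ} (h : 0 < height w) : (psi w).getD 0 0 = w.getD 0 0 := by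
  simp [psi, List.getD_eq_getElem?_getD, h]

theorem getD_psi_one {w : List ℕ} (h : 1 < height w) :
    (psi w).getD 1 0 =
      if (D w).getD 0 0 = 2 ∧ w.getD 0 0 ≠ w.getD 1 0 then 0 else (D w).getD 0 0 := by
  simp [psi, List.getD_eq_getElem?_getD, h]

theorem psi_D {w : List ℕ} (hw : Cinf w) (h : 1 < height w) :
    psi (D w) = (if (psi w).getD 1 0 = 0 then 2 else (psi w).getD 1 0) :: (psi w).drop 2 := by
  have hD : D w ≠ [] := D_ne_nil_of_one_lt_height h
  have hhead : (if (psi w).getD 1 0 = 0 then 2 else (psi w).getD 1 0) = (D w).getD 0 0 := by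
    have := hw.D.isWord.getD_zero hD
    rw [getD_psi_one h]
    split_ifs <;> omega
  obtain ⟨m, hw'⟩ : ∃ m, height w = m + 2 := ⟨height w - 2, by omega⟩
  have hm : height (D w) = m + 1 := by rw [height_D, hw']; rfl
  rw [hhead, psi, psi, hm, hw', List.range_succ_eq_map, List.range_succ_eq_map,
    List.range_succ_eq_map]
  simp only [List.map_cons, List.map_map, List.drop_succ_cons, List.drop_zero]
  congr 1

theorem getD_zero_eq_of_psi_eq {w v : List ℕ} (hw : w ≠ []) (h : psi w = psi v) :
    w.getD 0 0 = v.getD 0 0 := by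
  have hpos : 0 < height w := Nat.pos_of_ne_zero (mt height_eq_zero_iff.mp hw)
  have hpos' : 0 < height v := by rwa [← length_psi, ← h, length_psi]
  rw [← getD_psi_zero hpos, h, getD_psi_zero hpos']

theorem getD_rle_eq_one_iff {w : List ℕ} (hw : Cinf w) (h : 1 < height w) :
    (rle w).getD 0 0 = 1 ↔ (psi w).getD 1 0 ≠ 2 := by
  have hD : D w ≠ [] := D_ne_nil_of_one_lt_height h
  have hD0 := hw.D.isWord.getD_zero hD
  rw [getD_psi_one h]
  obtain ⟨a, b, t, rfl⟩ : ∃ a b t, w = a :: b :: t := by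
    rcases w with _ | ⟨a, _ | ⟨b, t⟩⟩
    · exact absurd rfl hD
    · exact absurd rfl hD
    · exact ⟨a, b, t, rfl⟩
  rw [getD_rle_cons_cons_eq_one_iff]
  simp only [List.getD_cons_zero, List.getD_cons_succ]
  by_cases hab : a = b
  · subst hab
    have hrle : (rle (a :: a :: t)).getD 0 0 ≠ 1 := by
      rw [ne_eq, getD_rle_cons_cons_eq_one_iff, not_not]
    have hhead : (D (a :: a :: t)).getD 0 0 = (rle (a :: a :: t)).getD 0 0 := by
      rw [rle_eq_ite_append_D_append_ite hD, if_neg hrle, List.nil_append,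
        List.getD_append _ _ _ _ (List.length_pos_iff.mpr hD)]
    simp only [ne_eq, not_true_eq_false, and_false, ite_false, false_iff, not_not]
    omega
  · split_ifs <;> omega

theorem rle_eq_of_one_lt_height {w : List ℕ} (hw : Cinf w) (h : 1 < height w) :
    rle w = (if (psi w).getD 1 0 ≠ 2 then [1] else []) ++ D w ++
      (if (psi w.reverse).getD 1 0 ≠ 2 then [1] else []) := by
  have h' : 1 < height w.reverse := by rwa [height_reverse]
  rw [← if_congr (getD_rle_eq_one_iff hw h) rfl rfl,
    ← if_congr (getD_rle_eq_one_iff hw.reverse h') rfl rfl]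
  exact rle_eq_ite_append_D_append_ite (D_ne_nil_of_one_lt_height h)

theorem eq_singleton_or_eq_pair_of_D_eq_nil {w : List ℕ} (hw : w ≠ []) (hD : D w = []) :
    (∃ a, w = [a]) ∨ ∃ a b, a ≠ b ∧ w = [a, b] :=
  (rle_eq_of_D_eq_nil hw hD).imp exists_eq_singleton_of_rle_eq exists_eq_pair_of_rle_eq

theorem eq_of_D_eq_nil {w v : List ℕ} (hw : w ≠ []) (hv : v ≠ []) (hDw : D w = []) (hDv : D v = [])
    (hfirst : w.getD 0 0 = v.getD 0 0) (hlast : w.reverse.getD 0 0 = v.reverse.getD 0 0) :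
    w = v := by
  rcases eq_singleton_or_eq_pair_of_D_eq_nil hw hDw with ⟨a, rfl⟩ | ⟨a, b, hab, rfl⟩ <;>
  rcases eq_singleton_or_eq_pair_of_D_eq_nil hv hDv with ⟨c, rfl⟩ | ⟨c, d, hcd, rfl⟩ <;>
  simp_all

theorem eq_of_psi_eq {w v : List ℕ} (hw : Cinf w) (hv : Cinf v) (hp : psi w = psi v)
    (hq : psi w.reverse = psi v.reverse) : w = v := by
  obtain ⟨n, hn⟩ : ∃ n, height w = n := ⟨_, rfl⟩
  have hn' : height v = n := by rw [← length_psi, ← hp, length_psi, hn]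
  induction n generalizing w v with
  | zero => rw [height_eq_zero_iff.mp hn, height_eq_zero_iff.mp hn']
  | succ n ih =>
    have hwne : w ≠ [] := mt height_eq_zero_iff.mpr (by omega)
    have hvne : v ≠ [] := mt height_eq_zero_iff.mpr (by omega)
    have hfirst := getD_zero_eq_of_psi_eq hwne hp
    rcases Nat.eq_zero_or_pos n with rfl | hpos
    · have hD {u : List ℕ} (hu : height u = 1) : D u = [] :=
        height_eq_zero_iff.mp (by rw [height_D, hu])
      exact eq_of_D_eq_nil hwne hvne (hD hn) (hD hn') hfirst
        (getD_zero_eq_of_psi_eq (by simpa using hwne) hq)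
    · have hw2 : 1 < height w := by omega
      have hv2 : 1 < height v := by omega
      have hDD : D w = D v := by
        refine ih hw.D hv.D (by rw [psi_D hw hw2, psi_D hv hv2, hp]) ?_ ?_ ?_
        · rw [← D_reverse, ← D_reverse, psi_D hw.reverse (by rwa [height_reverse]),
            psi_D hv.reverse (by rwa [height_reverse]), hq]
        · rw [height_D, hn]
          rfl
        · rw [height_D, hn']
          rfl
      refine eq_of_rle_eq hw.isWord hv.isWord hfirst ?_
      rw [rle_eq_of_one_lt_height hw hw2, rle_eq_of_one_lt_height hv hv2, hp, hq, hDD]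

/-- the vertical representation w ↦ (Ψ(w), Ψ(w~)) is injective on C∞. -/
theorem vertical_injective :
    Set.InjOn (fun w : List ℕ => (psi w, psi w.reverse)) {w | Cinf w} := by
  intro w hw v hv h
  obtain ⟨hp, hq⟩ := Prod.mk.inj h
  exact eq_of_psi_eq hw hv hp hq

end CInfWords
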